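/- Let (A, E, i, j, ∂) be an unrolled exact couple of bigraded abelian groups. Suppose that for every integer n there exists an integer s(n) such that A n s = 0 for all s ≥ s(n) (the bound being allowed to depend on n). Then the couple converges conditionally and converges strongly; in particular Z_∞^{n,s} = ker(∂ : E n s → A (n-1) (s+1)) for all n, s. -/

import Mathlib

/-!
If `A n s = 0` for `s ≥ s₀`, every tower in sight is eventually trivial: the groups `A n s`
with the maps `i`, and the filtration `F^s G n` with its inclusions. For such a tower the
equation `a_s - φ(a_{s+1}) = b_s` has exactly one solution, obtained by downward recursion
from `s₀`; this gives `lim = lim¹ = 0` and derived completeness, and `⋂ F^s = F^{s₀} = 0`.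
For `r` large, `i^r` into `A (n-1) (s+1)` starts at a trivial group, so `Z_r = ker ∂`.
-/

/-- An unrolled exact couple of bigraded abelian groups. -/
structure UnrolledExactCouple where
  A : ℤ → ℤ → AddCommGrpCat
  E : ℤ → ℤ → AddCommGrpCat
  i : ∀ n s : ℤ, A n (s + 1) →+ A n s
  j : ∀ n s : ℤ, A n s →+ E n s
  d : ∀ n s : ℤ, E n s →+ A (n - 1) (s + 1)
  exact_ij : ∀ n s : ℤ, (i n s).range = (j n s).ker
  exact_jd : ∀ n s : ℤ, (j n s).range = (d n s).ker
  exact_di : ∀ n s : ℤ, (d n s).range = (i (n - 1) s).ker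

namespace UnrolledExactCouple

variable (C : UnrolledExactCouple)

/-- Transport along an equality of the filtration index. -/
def cast (n : ℤ) {s t : ℤ} (h : s = t) : C.A n s →+ C.A n t := by
  subst h; exact AddMonoidHom.id _

/-- The `r`-fold composite `i^r : A n (s+r) →+ A n s` of the maps `i`. -/
def ipow (n : ℤ) : ∀ (r : ℕ) (s : ℤ), C.A n (s + (r : ℤ)) →+ C.A n s
  | 0, s => C.cast n (by simp)
  | r + 1, s =>
      ((C.i n s).comp ((ipow n r (s + 1)).comp (C.cast n (by push_cast; ring))))

/-- The transition map `A n t →+ A n s` for `s ≤ t`, a composite of the maps `i`. -/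
def tr (n : ℤ) (t s : ℤ) (h : s ≤ t) : C.A n t →+ C.A n s :=
  (C.ipow n (t - s).toNat s).comp
    (C.cast n (by rw [Int.toNat_of_nonneg (by omega : (0:ℤ) ≤ t - s)]; omega))

/-- The colimit `G n` of the direct system `(A n s)` (s decreasing) along the maps `i`. -/
def G (n : ℤ) : Type :=
  AddCommGroup.DirectLimit (fun s : ℤᵒᵈ => C.A n (OrderDual.ofDual s))
    (fun s t h => C.tr n (OrderDual.ofDual s) (OrderDual.ofDual t) h)

noncomputable instance (n : ℤ) : AddCommGroup (C.G n) := by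
  unfold G; infer_instance

/-- The structure map `κ_s : A n s →+ G n`. -/
noncomputable def kappa (n s : ℤ) : C.A n s →+ C.G n :=
  AddCommGroup.DirectLimit.of (fun s : ℤᵒᵈ => C.A n (OrderDual.ofDual s))
    (fun s t h => C.tr n (OrderDual.ofDual s) (OrderDual.ofDual t) h) (OrderDual.toDual s)

/-- The abutment filtration `F^s G n := im κ_s`. -/
noncomputable def F (n s : ℤ) : AddSubgroup (C.G n) :=
  (C.kappa n s).range

/-- The `r`-cycles `Z_r^{n,s} := ∂⁻¹(im(i^r : A (n-1) (s+1+r) → A (n-1) (s+1)))`. -/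
def Z (n s : ℤ) (r : ℕ) : AddSubgroup (C.E n s) :=
  ((C.ipow (n - 1) r (s + 1)).range).comap (C.d n s)

/-- The `r`-boundaries `B_r^{n,s} := j(ker(i^r : A n s → A n (s-r)))`. -/
def B (n s : ℤ) (r : ℕ) : AddSubgroup (C.E n s) :=
  ((C.tr n s (s - (r : ℤ)) (by omega)).ker).map (C.j n s)

/-- The permanent cycles `Z_∞^{n,s} = ⋂_r Z_r^{n,s}`. -/
def Zinf (n s : ℤ) : AddSubgroup (C.E n s) := ⨅ r : ℕ, C.Z n s r

/-- The infinite boundaries `B_∞^{n,s} = ⋃_r B_r^{n,s}`. -/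
def Binf (n s : ℤ) : AddSubgroup (C.E n s) := ⨆ r : ℕ, C.B n s r

/-- Conditional convergence: for every `n` the limit and `lim¹` of the tower
`(A n s)_s` vanish, i.e. the map `(a_s)_s ↦ (a_s - i(a_{s+1}))_s` is bijective. -/
def ConvergesConditionally : Prop :=
  ∀ n : ℤ, Function.Bijective
    (fun (a : ∀ s : ℤ, C.A n s) => fun s : ℤ => a s - C.i n s (a (s + 1)))

/-- Strong convergence. -/
def ConvergesStrongly : Prop :=
  (∀ n : ℤ,
      (⨅ s : ℤ, C.F n s) = ⊥ ∧
      (∀ b : ℤ → C.G n, (∀ s, b s ∈ C.F n s) →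
        ∃ x : ℤ → C.G n, (∀ s, x s ∈ C.F n s) ∧ ∀ s, x s - x (s + 1) = b s)) ∧
    (∀ n s : ℤ, C.Zinf n s = (C.d n s).ker)

end UnrolledExactCouple

section Tower

variable {T : ℤ → Type*} [∀ s, AddCommGroup (T s)] (φ : ∀ s : ℤ, T (s + 1) →+ T s)

/-- The map `(a_s)_s ↦ (a_s - φ(a_{s+1}))_s` whose kernel and cokernel are `lim` and `lim¹`. -/
def towerSub : (∀ s, T s) →+ (∀ s, T s) :=
  AddMonoidHom.mk' (fun a s => a s - φ s (a (s + 1))) fun a b => by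
    funext s
    simp only [Pi.add_apply, map_add]
    abel

@[simp]
lemma towerSub_apply (a : ∀ s, T s) (s : ℤ) : towerSub φ a s = a s - φ s (a (s + 1)) := rfl

def towerPartialSum (b : ∀ s, T s) : ℕ → ∀ s, T s
  | 0 => 0
  | k + 1 => fun s => b s + φ s (towerPartialSum b k (s + 1))

variable {φ} {s₀ : ℤ} (htriv : ∀ s, s₀ ≤ s → ∀ x : T s, x = 0)
include htriv

lemma towerSub_injective : Function.Injective (towerSub φ) := by
  refine (injective_iff_map_eq_zero _).mpr fun a ha => funext fun s => ?_
  have hstep : ∀ t, a t = φ t (a (t + 1)) := fun t => sub_eq_zero.mp (congrFun ha t)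
  rcases le_or_gt s₀ s with hs | hs
  · exact htriv s hs _
  refine Int.leInductionDown (m := s₀) (motive := fun t _ => a t = 0) (htriv s₀ le_rfl _)
    (fun t _ ht => ?_) s hs.le
  have ht' : a (t - 1 + 1) = 0 := by rw [sub_add_cancel]; exact ht
  rw [hstep, ht', map_zero]

/-- For `s < s₀` the partial sum at `s` has one more term than the one at `s + 1`; for `s ≥ s₀`
the equation holds in a trivial group. -/
lemma towerSub_surjective : Function.Surjective (towerSub φ) := by
  intro b
  refine ⟨fun s => towerPartialSum φ b (s₀ - s).toNat s, funext fun s => ?_⟩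
  rcases le_or_gt s₀ s with hs | hs
  · exact (htriv s hs _).trans (htriv s hs _).symm
  have hlen : (s₀ - s).toNat = (s₀ - (s + 1)).toNat + 1 := by omega
  simp only [towerSub_apply, hlen, towerPartialSum]
  abel

lemma towerSub_bijective : Function.Bijective (towerSub φ) :=
  ⟨towerSub_injective htriv, towerSub_surjective htriv⟩

end Tower

namespace UnrolledExactCouple

variable (C : UnrolledExactCouple)

lemma kappa_tr (n : ℤ) {s t : ℤ} (h : s ≤ t) (a : C.A n t) :
    C.kappa n s (C.tr n t s h a) = C.kappa n t a :=
  AddCommGroup.DirectLimit.of_f (G := fun u : ℤᵒᵈ => C.A n (OrderDual.ofDual u))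
    (f := fun u v h => C.tr n (OrderDual.ofDual u) (OrderDual.ofDual v) h)
    (OrderDual.toDual_le_toDual.mpr h) a

lemma F_succ_le (n s : ℤ) : C.F n (s + 1) ≤ C.F n s := by
  rintro _ ⟨a, rfl⟩
  exact ⟨C.tr n (s + 1) s (by omega) a, C.kappa_tr n _ a⟩

lemma F_eq_bot {n s : ℤ} (hA : ∀ a : C.A n s, a = 0) : C.F n s = ⊥ := by
  rw [AddSubgroup.eq_bot_iff_forall]
  rintro _ ⟨a, rfl⟩
  rw [hA a, map_zero]

lemma convergesConditionally_of_eventually_zero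
    (h : ∀ n : ℤ, ∃ s₀ : ℤ, ∀ s : ℤ, s₀ ≤ s → ∀ a : C.A n s, a = 0) :
    C.ConvergesConditionally := fun n =>
  let ⟨_, hs₀⟩ := h n
  towerSub_bijective (T := fun s => C.A n s) (φ := C.i n) hs₀

lemma ker_d_le_Zinf (n s : ℤ) : (C.d n s).ker ≤ C.Zinf n s :=
  le_iInf fun r x hx => by
    rw [Z, AddSubgroup.mem_comap, AddMonoidHom.mem_ker.mp hx]
    exact zero_mem _

lemma Zinf_eq_ker_d {n s₀ : ℤ} (hs₀ : ∀ t : ℤ, s₀ ≤ t → ∀ a : C.A (n - 1) t, a = 0) (s : ℤ) :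
    C.Zinf n s = (C.d n s).ker := by
  refine le_antisymm ?_ (C.ker_d_le_Zinf n s)
  refine (iInf_le _ (s₀ - (s + 1)).toNat).trans fun x ⟨a, ha⟩ => ?_
  rw [AddMonoidHom.mem_ker, ← ha, hs₀ _ (by omega) a, map_zero]

variable {C} {n s₀ : ℤ} (hs₀ : ∀ s : ℤ, s₀ ≤ s → ∀ a : C.A n s, a = 0)
include hs₀

lemma iInf_F_eq_bot : ⨅ s : ℤ, C.F n s = ⊥ :=
  eq_bot_iff.mpr <| (iInf_le _ s₀).trans (C.F_eq_bot (hs₀ s₀ le_rfl)).le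

/-- Derived completeness of the filtration. -/
lemma exists_sub_succ_eq_of_mem_F (b : ℤ → C.G n) (hb : ∀ s, b s ∈ C.F n s) :
    ∃ x : ℤ → C.G n, (∀ s, x s ∈ C.F n s) ∧ ∀ s, x s - x (s + 1) = b s := by
  have htriv : ∀ s, s₀ ≤ s → ∀ y : C.F n s, y = 0 := fun s hs y =>
    Subtype.ext ((C.F_eq_bot (hs₀ s hs)).le y.2)
  obtain ⟨x, hx⟩ := towerSub_surjective (φ := fun s => AddSubgroup.inclusion (C.F_succ_le n s))
    htriv fun s => ⟨b s, hb s⟩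
  exact ⟨fun s => x s, fun s => (x s).2, fun s => congrArg Subtype.val (congrFun hx s)⟩

end UnrolledExactCouple

/-- If for every `n` the groups `A n s` vanish for all sufficiently large `s` (the bound
being allowed to depend on `n`), then the exact couple converges conditionally and
strongly; in particular `Z_∞^{n,s} = ker ∂` for all `n, s`. -/
theorem UnrolledExactCouple.eventually_zero_implies_strong_convergence
    (C : UnrolledExactCouple)
    (h : ∀ n : ℤ, ∃ s₀ : ℤ, ∀ s : ℤ, s₀ ≤ s → ∀ a : C.A n s, a = 0) :
    C.ConvergesConditionally ∧ C.ConvergesStrongly ∧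
      ∀ n s : ℤ, C.Zinf n s = (C.d n s).ker := by
  have hZ : ∀ n s : ℤ, C.Zinf n s = (C.d n s).ker := fun n s =>
    let ⟨_, hs₀⟩ := h (n - 1)
    C.Zinf_eq_ker_d hs₀ s
  refine ⟨C.convergesConditionally_of_eventually_zero h, ⟨fun n => ?_, hZ⟩, hZ⟩
  obtain ⟨s₀, hs₀⟩ := h n
  exact ⟨iInf_F_eq_bot hs₀, exists_sub_succ_eq_of_mem_F hs₀⟩
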